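/- arXiv:2504.11849 — 9 statements merged into one kernel-verified Lean document; each statement's English description precedes it below -/
import Mathlib

section
/- Let X be a real Banach space and x, u ∈ X with x ≠ 0. Then u ∈ x⁺ \ x⁻ if and only if f(u) > 0 for every norm-one functional f supporting x (i.e., every f ∈ X* with ||f|| = 1 and f(x) = ||x||). Similarly, u ∈ x⁻ \ x⁺ if and only if f(u) < 0 for every such supporting functional. -/
/-!
If `u ∈ x⁺`, the ray `x + ℝ≥0 • u` misses the open ball of radius `‖x‖`; a functional separating
the two (geometric Hahn–Banach) attains its norm at `x` and is nonnegative at `u`, so after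
normalisation it supports `x`. Conversely a supporting functional that is nonnegative at `u`
forces `u ∈ x⁺`. As `x⁻ = -x⁺`, both equivalences follow.
-/

open scoped ENNReal

/-- Birkhoff-James orthogonality: `x ⊥_B y` iff `‖x + c • y‖ ≥ ‖x‖` for all scalars `c`. -/
def BJOrth (𝕜 : Type*) {X : Type*} [RCLike 𝕜] [NormedAddCommGroup X] [NormedSpace 𝕜 X]
    (x y : X) : Prop := ∀ c : 𝕜, ‖x‖ ≤ ‖x + c • y‖

/-- `x` is a left symmetric point. -/
def LeftSymPt (𝕜 : Type*) {X : Type*} [RCLike 𝕜] [NormedAddCommGroup X] [NormedSpace 𝕜 X]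
    (x : X) : Prop := ∀ y : X, BJOrth 𝕜 x y → BJOrth 𝕜 y x

/-- `x` is a right symmetric point. -/
def RightSymPt (𝕜 : Type*) {X : Type*} [RCLike 𝕜] [NormedAddCommGroup X] [NormedSpace 𝕜 X]
    (x : X) : Prop := ∀ y : X, BJOrth 𝕜 y x → BJOrth 𝕜 x y

/-- `u ∈ x⁺` : `‖x + t • u‖ ≥ ‖x‖` for all `t ≥ 0`. -/
def InPlus {X : Type*} [NormedAddCommGroup X] [NormedSpace ℝ X] (x u : X) : Prop :=
  ∀ t : ℝ, 0 ≤ t → ‖x‖ ≤ ‖x + t • u‖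

/-- `u ∈ x⁻` : `‖x + t • u‖ ≥ ‖x‖` for all `t ≤ 0`. -/
def InMinus {X : Type*} [NormedAddCommGroup X] [NormedSpace ℝ X] (x u : X) : Prop :=
  ∀ t : ℝ, t ≤ 0 → ‖x‖ ≤ ‖x + t • u‖

open Metric

lemma ContinuousLinearMap.norm_mul_le_of_forall_lt_on_ball {E : Type*}
    [NormedAddCommGroup E] [NormedSpace ℝ E] (f : E →L[ℝ] ℝ) {r c : ℝ} (hr : 0 < r)
    (hf : ∀ a ∈ ball (0 : E) r, f a < c) : ‖f‖ * r ≤ c := by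
  rw [← le_div_iff₀ hr]
  by_contra! hlt
  obtain ⟨z, hz, hcz⟩ := f.exists_lt_apply_of_lt_opNorm hlt
  have hrz : ‖r • z‖ < r := by
    rw [norm_smul, Real.norm_of_nonneg hr.le]
    exact mul_lt_of_lt_one_right hr hz
  have h₁ : r * f z < c := by simpa using hf (r • z) (mem_ball_zero_iff.mpr hrz)
  have h₂ : -(r * f z) < c := by
    simpa using hf (-(r • z)) (mem_ball_zero_iff.mpr (by rwa [norm_neg]))
  rw [div_lt_iff₀ hr, Real.norm_eq_abs] at hcz
  rcases abs_cases (f z) with ⟨hzabs, -⟩ | ⟨hzabs, -⟩ <;> rw [hzabs] at hcz <;> linarith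

section

variable {X : Type*} [NormedAddCommGroup X] [NormedSpace ℝ X] {x u : X}

lemma inMinus_iff_inPlus_neg : InMinus x u ↔ InPlus x (-u) :=
  ⟨fun h t ht => by simpa using h (-t) (by linarith),
    fun h t ht => by simpa using h (-t) (by linarith)⟩

lemma inPlus_of_apply_nonneg (f : X →L[ℝ] ℝ) (hf : ‖f‖ ≤ 1) (hfx : f x = ‖x‖)
    (hfu : 0 ≤ f u) : InPlus x u := fun t ht =>
  calc ‖x‖ ≤ f x + t * f u := by rw [hfx]; exact le_add_of_nonneg_right (mul_nonneg ht hfu)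
    _ = f (x + t • u) := by rw [map_add, map_smul, smul_eq_mul]
    _ ≤ ‖x + t • u‖ := by
      simpa [Real.norm_eq_abs] using (le_abs_self _).trans (f.le_of_opNorm_le hf (x + t • u))

lemma InPlus.exists_dual_nonneg (hx : x ≠ 0) (h : InPlus x u) :
    ∃ f : X →L[ℝ] ℝ, ‖f‖ = 1 ∧ f x = ‖x‖ ∧ 0 ≤ f u := by
  set ray := (fun t : ℝ => x + t • u) '' Set.Ici 0
  have hray : Convex ℝ ray := by
    rintro _ ⟨s, hs, rfl⟩ _ ⟨t, ht, rfl⟩ a b ha hb hab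
    refine ⟨a * s + b * t, add_nonneg (mul_nonneg ha hs) (mul_nonneg hb ht), ?_⟩
    linear_combination (norm := module) -hab • x
  have hdisj : Disjoint (ball 0 ‖x‖) ray := by
    rw [Set.disjoint_right]
    rintro _ ⟨t, ht, rfl⟩
    simpa using h t ht
  have hxpos : 0 < ‖x‖ := norm_pos_iff.mpr hx
  obtain ⟨f, c, hball, hc⟩ := geometric_hahn_banach_open (convex_ball 0 _) isOpen_ball hray hdisj
  have hnorm := f.norm_mul_le_of_forall_lt_on_ball hxpos hball
  have hcx : c ≤ f x := hc x ⟨0, Set.self_mem_Ici, by simp⟩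
  have hcxu : c ≤ f x + f u := by
    simpa using hc (x + u) ⟨1, Set.mem_Ici.mpr zero_le_one, by simp⟩
  have hc0 : 0 < c := by simpa using hball 0 (mem_ball_self hxpos)
  have hfx : f x ≤ ‖f‖ * ‖x‖ := (le_abs_self _).trans (f.le_opNorm x)
  have hf : 0 < ‖f‖ := pos_of_mul_pos_left (hc0.trans_le (hcx.trans hfx)) (norm_nonneg x)
  refine ⟨‖f‖⁻¹ • f, ?_, ?_, ?_⟩
  · rw [norm_smul, norm_inv, norm_norm, inv_mul_cancel₀ hf.ne']
  · rw [smul_apply, smul_eq_mul, inv_mul_eq_iff_eq_mul₀ hf.ne']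
    linarith
  · have hfu : 0 ≤ f u := by linarith
    exact smul_nonneg (inv_nonneg.mpr hf.le) hfu

lemma inPlus_and_not_inMinus_iff (hx : x ≠ 0) :
    (InPlus x u ∧ ¬ InMinus x u) ↔ ∀ f : X →L[ℝ] ℝ, ‖f‖ = 1 → f x = ‖x‖ → 0 < f u := by
  rw [inMinus_iff_inPlus_neg]
  constructor
  · rintro ⟨-, hneg⟩ f hf hfx
    by_contra! hfu
    exact hneg (inPlus_of_apply_nonneg f hf.le hfx (by simpa using hfu))
  · intro hall
    obtain ⟨f, hf, hfx⟩ := exists_dual_vector ℝ x (norm_ne_zero_iff.mpr hx)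
    replace hfx : f x = ‖x‖ := hfx
    refine ⟨inPlus_of_apply_nonneg f hf.le hfx (hall f hf hfx).le, fun hneg => ?_⟩
    obtain ⟨g, hg, hgx, hgu⟩ := hneg.exists_dual_nonneg hx
    have := hall g hg hgx
    rw [map_neg] at hgu
    linarith

end

theorem stmt1_general {X : Type*} [NormedAddCommGroup X] [NormedSpace ℝ X]
    (x u : X) (hx : x ≠ 0) :
    ((InPlus x u ∧ ¬ InMinus x u) ↔
      ∀ f : X →L[ℝ] ℝ, ‖f‖ = 1 → f x = ‖x‖ → 0 < f u) ∧
    ((InMinus x u ∧ ¬ InPlus x u) ↔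
      ∀ f : X →L[ℝ] ℝ, ‖f‖ = 1 → f x = ‖x‖ → f u < 0) := by
  refine ⟨inPlus_and_not_inMinus_iff hx, ?_⟩
  simpa only [inMinus_iff_inPlus_neg, neg_neg, map_neg, neg_pos]
    using inPlus_and_not_inMinus_iff (u := -u) hx

/-- Characterization of u ∈ x⁺∖x⁻ and u ∈ x⁻∖x⁺ via supporting functionals. -/
theorem stmt1 {X : Type*} [NormedAddCommGroup X] [NormedSpace ℝ X] [CompleteSpace X]
    (x u : X) (hx : x ≠ 0) :
    ((InPlus x u ∧ ¬ InMinus x u) ↔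
      ∀ f : X →L[ℝ] ℝ, ‖f‖ = 1 → f x = ‖x‖ → 0 < f u) ∧
    ((InMinus x u ∧ ¬ InPlus x u) ↔
      ∀ f : X →L[ℝ] ℝ, ‖f‖ = 1 → f x = ‖x‖ → f u < 0) :=
  stmt1_general x u hx
end

section
/- Let K be a non-empty set and X a Banach space. If f ∈ ℓ∞(K, X) satisfies: (i) there exists k₀ ∈ K with ||f(k₀)|| = 1 and f(k) = 0 for all k ≠ k₀, and (ii) f(k₀) is a left symmetric point of X, then f is a left symmetric point of ℓ∞(K, X). -/
open scoped ENNReal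

/-!
Write `x = f k₀`. If `f ⊥_B g` in `ℓ∞(K, X)`, then `x ⊥_B g k₀`: for small `c` the coordinates
`k ≠ k₀` of `f + c • g` are too small to carry the sup norm, so `‖x + c • g k₀‖ ≥ ‖x‖` for small
`c`, and by convexity of `c ↦ ‖x + c • g k₀‖` for all `c`. Left symmetry of `x` gives
`g k₀ ⊥_B x`, and since `f` vanishes off `k₀` this lifts coordinatewise to `g ⊥_B f`.
-/

open Filter Topology

section BJOrth

variable {𝕜 X : Type*} [RCLike 𝕜] [NormedAddCommGroup X] [NormedSpace 𝕜 X]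

theorem BJOrth.of_eventually_nhds_zero {x y : X}
    (h : ∀ᶠ c in 𝓝 (0 : 𝕜), ‖x‖ ≤ ‖x + c • y‖) : BJOrth 𝕜 x y := by
  intro c
  have hlim : Tendsto (fun t : ℝ => (t : 𝕜) * c) (𝓝[>] 0) (𝓝 0) := by
    have : Tendsto (fun t : ℝ => (t : 𝕜) * c) (𝓝 0) (𝓝 0) := by
      simpa using (RCLike.continuous_ofReal.tendsto 0).mul_const c
    exact this.mono_left nhdsWithin_le_nhds
  obtain ⟨t, hxt, ht0, ht1⟩ :=
    ((hlim.eventually h).and (Ioo_mem_nhdsGT (zero_lt_one' ℝ))).exists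
  have hconv : x + ((t : 𝕜) * c) • y = ((1 - t : ℝ) : 𝕜) • x + (t : 𝕜) • (x + c • y) := by
    push_cast
    rw [sub_smul, one_smul, smul_add, smul_smul]
    abel
  have hle : ‖x + ((t : 𝕜) * c) • y‖ ≤ (1 - t) * ‖x‖ + t * ‖x + c • y‖ := by
    rw [hconv]
    refine (norm_add_le _ _).trans_eq ?_
    rw [norm_smul, norm_smul, RCLike.norm_ofReal, RCLike.norm_ofReal,
      abs_of_pos (sub_pos.2 ht1), abs_of_pos ht0]
  nlinarith

end BJOrth

namespace lp

variable {𝕜 K : Type*} {E : K → Type*} [RCLike 𝕜] [∀ k, NormedAddCommGroup (E k)]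
  [∀ k, NormedSpace 𝕜 (E k)]

theorem norm_add_le_max_of_apply_eq_zero {f : lp E ∞} {k₀ : K} (h0 : ∀ k, k ≠ k₀ → f k = 0)
    (g : lp E ∞) : ‖f + g‖ ≤ max ‖f k₀ + g k₀‖ ‖g‖ := by
  refine norm_le_of_forall_le ((norm_nonneg _).trans (le_max_right _ _)) fun k => ?_
  rw [coeFn_add, Pi.add_apply]
  by_cases hk : k = k₀
  · subst hk
    exact le_max_left _ _
  · rw [h0 k hk, zero_add]
    exact (norm_apply_le_norm ENNReal.top_ne_zero g k).trans (le_max_right _ _)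

theorem bjOrth_apply_of_bjOrth {f g : lp E ∞} {k₀ : K} (h0 : ∀ k, k ≠ k₀ → f k = 0)
    (hfg : BJOrth 𝕜 f g) : BJOrth 𝕜 (f k₀) (g k₀) := by
  by_cases hf : f k₀ = 0
  · intro c
    simp [hf]
  refine BJOrth.of_eventually_nhds_zero ?_
  have hsmall : ∀ᶠ c in 𝓝 (0 : 𝕜), ‖c • g‖ < ‖f k₀‖ := by
    have : Tendsto (fun c : 𝕜 => ‖c • g‖) (𝓝 0) (𝓝 0) := by
      simpa using ((continuous_id.smul (continuous_const (y := g))).norm.tendsto (0 : 𝕜))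
    exact this.eventually (gt_mem_nhds (norm_pos_iff.2 hf))
  filter_upwards [hsmall] with c hc
  by_contra! hlt
  have hmax : ‖f + c • g‖ < ‖f k₀‖ := by
    refine (norm_add_le_max_of_apply_eq_zero h0 (c • g)).trans_lt (max_lt ?_ hc)
    simpa only [coeFn_smul, Pi.smul_apply] using hlt
  exact (hmax.trans_le (norm_apply_le_norm ENNReal.top_ne_zero f k₀)).not_ge (hfg c)

theorem bjOrth_of_bjOrth_apply {f g : lp E ∞} {k₀ : K} (h0 : ∀ k, k ≠ k₀ → f k = 0)
    (hgf : BJOrth 𝕜 (g k₀) (f k₀)) : BJOrth 𝕜 g f := by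
  intro c
  refine norm_le_of_forall_le (norm_nonneg _) fun k => ?_
  refine le_trans ?_ (norm_apply_le_norm ENNReal.top_ne_zero (g + c • f) k)
  rw [coeFn_add, coeFn_smul, Pi.add_apply, Pi.smul_apply]
  by_cases hk : k = k₀
  · subst hk
    exact hgf c
  · rw [h0 k hk, smul_zero, add_zero]

theorem leftSymPt_of_leftSymPt_apply {f : lp E ∞} {k₀ : K} (h0 : ∀ k, k ≠ k₀ → f k = 0)
    (h : LeftSymPt 𝕜 (f k₀)) : LeftSymPt 𝕜 f :=
  fun _ hfg => bjOrth_of_bjOrth_apply h0 (h _ (bjOrth_apply_of_bjOrth h0 hfg))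

end lp

theorem stmt2_general (𝕜 K X : Type*) [RCLike 𝕜]
    [NormedAddCommGroup X] [NormedSpace 𝕜 X]
    (f : lp (fun _ : K => X) ∞) (k₀ : K)
    (h0 : ∀ k : K, k ≠ k₀ → f k = 0) (h2 : LeftSymPt 𝕜 (f k₀)) :
    LeftSymPt 𝕜 f :=
  lp.leftSymPt_of_leftSymPt_apply h0 h2

/-- Sufficiency: such f is left symmetric in ℓ∞(K, X). -/
theorem stmt2 (𝕜 K X : Type*) [RCLike 𝕜] [Nonempty K]
    [NormedAddCommGroup X] [NormedSpace 𝕜 X] [CompleteSpace X]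
    (f : lp (fun _ : K => X) ∞) (k₀ : K) (h1 : ‖f k₀‖ = 1)
    (h0 : ∀ k : K, k ≠ k₀ → f k = 0) (h2 : LeftSymPt 𝕜 (f k₀)) :
    LeftSymPt 𝕜 f :=
  stmt2_general 𝕜 K X f k₀ h0 h2
end

section
/- Let K be a non-empty set and X a Banach space. If f ∈ ℓ∞(K, X) with ||f|| = 1 is a left symmetric point of ℓ∞(K, X), then there exists k₀ ∈ K such that ||f(k₀)|| = 1, f(k) = 0 for all k ≠ k₀, and f(k₀) is a left symmetric point of X. -/
open scoped ENNReal

/-!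
If `f k ≠ 0` while the other coordinates of `f` come arbitrarily close to `‖f‖`, then `f` is
Birkhoff–James orthogonal to its restriction `g` to `k`, whereas `g` is not orthogonal to `f`.
So at a left symmetric `f`, each coordinate where `f` does not vanish dominates all the others
by a fixed margin. Hence there is exactly one such coordinate `k₀`, it carries the norm, and
left symmetry descends to `f k₀`, since vectors supported at `k₀` are orthogonal in
`ℓ∞(K, X)` exactly when their values at `k₀` are orthogonal in `X`.
-/

namespace lp

variable {K : Type*} {E : K → Type*} [∀ k, NormedAddCommGroup (E k)]

theorem norm_eq_norm_apply_of_forall_ne {f : lp E ∞} {k₀ : K} (hf : ∀ k ≠ k₀, f k = 0) :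
    ‖f‖ = ‖f k₀‖ := by
  refine le_antisymm (norm_le_of_forall_le (norm_nonneg _) fun k => ?_)
    (norm_apply_le_norm ENNReal.top_ne_zero f k₀)
  rcases eq_or_ne k k₀ with rfl | hk
  · exact le_rfl
  · simp [hf k hk]

theorem norm_apply_eq_norm_of_forall_ne_le {f : lp E ∞} {k₀ : K} {ε : ℝ} (hε : 0 < ε)
    (hf : ∀ k ≠ k₀, ‖f k‖ ≤ ‖f‖ - ε) : ‖f k₀‖ = ‖f‖ := by
  refine le_antisymm (norm_apply_le_norm ENNReal.top_ne_zero f k₀) ?_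
  by_contra! hlt
  have : ‖f‖ ≤ max ‖f k₀‖ (‖f‖ - ε) := by
    refine norm_le_of_forall_le (le_max_of_le_left (norm_nonneg _)) fun k => ?_
    rcases eq_or_ne k k₀ with rfl | hk
    · exact le_max_left _ _
    · exact le_max_of_le_right (hf k hk)
  exact (max_lt hlt (by linarith)).not_ge this

theorem add_smul_apply {𝕜 : Type*} [NormedRing 𝕜] [∀ k, Module 𝕜 (E k)]
    [∀ k, IsBoundedSMul 𝕜 (E k)] {p : ℝ≥0∞} [Fact (1 ≤ p)] (u v : lp E p) (c : 𝕜) (k : K) :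
    (u + c • v) k = u k + c • v k :=
  rfl

end lp

section BJOrth

variable {𝕜 K X : Type*} [RCLike 𝕜] [NormedAddCommGroup X] [NormedSpace 𝕜 X]

theorem bjOrth_of_forall_exists_ne_lt {f g : lp (fun _ : K => X) ∞} {k : K}
    (hg : ∀ k' ≠ k, g k' = 0) (hf : ∀ ε > 0, ∃ k' ≠ k, ‖f‖ - ε < ‖f k'‖) : BJOrth 𝕜 f g := by
  intro c
  refine le_of_forall_sub_le fun ε hε => ?_
  obtain ⟨k', hk', hlt⟩ := hf ε hε
  have : ‖f k'‖ ≤ ‖f + c • g‖ := by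
    simpa [lp.add_smul_apply, hg k' hk'] using
      lp.norm_apply_le_norm ENNReal.top_ne_zero (f + c • g) k'
  linarith

/-- With `g = lp.single ∞ k (f k)` and `t = ‖f k‖ / (2 ‖f‖)`, the vector `g - t • f` is shorter
than `g`: it is `(1 - t) • f k` at `k` and has norm at most `‖f k‖ / 2` elsewhere. -/
theorem not_bjOrth_single_apply [DecidableEq K] {f : lp (fun _ : K => X) ∞} {k : K}
    (hk : f k ≠ 0) : ¬ BJOrth 𝕜 (lp.single ∞ k (f k) : lp (fun _ : K => X) ∞) f := by
  set g : lp (fun _ : K => X) ∞ := lp.single ∞ k (f k)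
  set a := ‖f k‖
  have ha : 0 < a := norm_pos_iff.mpr hk
  have haf : a ≤ ‖f‖ := lp.norm_apply_le_norm ENNReal.top_ne_zero f k
  have hf : 0 < ‖f‖ := ha.trans_le haf
  set t := a / (2 * ‖f‖)
  have ht : 0 < t := div_pos ha (by positivity)
  have ht_half : t ≤ 1 / 2 := by
    rw [div_le_iff₀ (by positivity)]; linarith
  have htf : t * ‖f‖ = a / 2 := by simp only [t]; field_simp
  have hg_apply (j : K) : (g + (-(t : 𝕜)) • f) j = g j - (t : 𝕜) • f j := by
    rw [lp.add_smul_apply, neg_smul, sub_eq_add_neg]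
  intro h
  have hle : a ≤ ‖g + (-(t : 𝕜)) • f‖ := by
    simpa [g, lp.norm_single] using h (-(t : 𝕜))
  refine hle.not_gt (lt_of_le_of_lt
    (lp.norm_le_of_forall_le (C := max ((1 - t) * a) (a / 2)) (by positivity) fun j => ?_)
    (max_lt (by nlinarith) (by linarith)))
  rcases eq_or_ne j k with rfl | hj
  · have : (g + (-(t : 𝕜)) • f) j = ((1 - t : ℝ) : 𝕜) • f j := by
      rw [hg_apply, lp.single_apply_self]
      push_cast
      module
    rw [this, norm_smul, RCLike.norm_ofReal, abs_of_nonneg (by linarith)]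
    exact le_max_left _ _
  · rw [hg_apply, lp.single_apply_ne _ _ _ hj, zero_sub, norm_neg, norm_smul,
      RCLike.norm_ofReal, abs_of_pos ht, ← htf]
    exact le_max_of_le_right
      (mul_le_mul_of_nonneg_left (lp.norm_apply_le_norm ENNReal.top_ne_zero f j) ht.le)

theorem bjOrth_iff_apply_of_forall_ne {f g : lp (fun _ : K => X) ∞} {k₀ : K}
    (hf : ∀ k ≠ k₀, f k = 0) (hg : ∀ k ≠ k₀, g k = 0) :
    BJOrth 𝕜 f g ↔ BJOrth 𝕜 (f k₀) (g k₀) := by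
  have key (u v : lp (fun _ : K => X) ∞) (hu : ∀ k ≠ k₀, u k = 0) (hv : ∀ k ≠ k₀, v k = 0)
      (c : 𝕜) : ‖u + c • v‖ = ‖u k₀ + c • v k₀‖ :=
    lp.norm_eq_norm_apply_of_forall_ne fun k hk => by simp [lp.add_smul_apply, hu k hk, hv k hk]
  simp only [BJOrth, key f g hf hg, lp.norm_eq_norm_apply_of_forall_ne hf]

end BJOrth

namespace LeftSymPt

variable {𝕜 K X : Type*} [RCLike 𝕜] [NormedAddCommGroup X] [NormedSpace 𝕜 X]

theorem exists_forall_ne_norm_apply_le {f : lp (fun _ : K => X) ∞} (hsym : LeftSymPt 𝕜 f)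
    {k : K} (hk : f k ≠ 0) : ∃ ε > 0, ∀ k' ≠ k, ‖f k'‖ ≤ ‖f‖ - ε := by
  classical
  by_contra! h
  exact not_bjOrth_single_apply hk
    (hsym _ (bjOrth_of_forall_exists_ne_lt (fun k' hk' => lp.single_apply_ne _ _ _ hk') h))

theorem apply_of_forall_ne {f : lp (fun _ : K => X) ∞} (hsym : LeftSymPt 𝕜 f) {k₀ : K}
    (hf : ∀ k ≠ k₀, f k = 0) : LeftSymPt 𝕜 (f k₀) := by
  classical
  intro y hy
  set g : lp (fun _ : K => X) ∞ := lp.single ∞ k₀ y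
  have hg : ∀ k ≠ k₀, g k = 0 := fun k hk => lp.single_apply_ne _ _ _ hk
  have hgk₀ : g k₀ = y := lp.single_apply_self _ _ _
  have := hsym g ((bjOrth_iff_apply_of_forall_ne hf hg).2 (hgk₀ ▸ hy))
  rwa [bjOrth_iff_apply_of_forall_ne hg hf, hgk₀] at this

end LeftSymPt

theorem stmt3_general (𝕜 K X : Type*) [RCLike 𝕜]
    [NormedAddCommGroup X] [NormedSpace 𝕜 X]
    (f : lp (fun _ : K => X) ∞) (hf : ‖f‖ = 1) (hsym : LeftSymPt 𝕜 f) :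
    ∃ k₀ : K, ‖f k₀‖ = 1 ∧ (∀ k : K, k ≠ k₀ → f k = 0) ∧ LeftSymPt 𝕜 (f k₀) := by
  obtain ⟨k₀, hk₀⟩ : ∃ k₀, f k₀ ≠ 0 := by
    by_contra! h
    have : f = 0 := lp.ext (funext h)
    simp [this] at hf
  obtain ⟨ε, hε, hbound⟩ := hsym.exists_forall_ne_norm_apply_le hk₀
  have hnorm : ‖f k₀‖ = ‖f‖ := lp.norm_apply_eq_norm_of_forall_ne_le hε hbound
  have hzero : ∀ k ≠ k₀, f k = 0 := by
    intro k hk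
    by_contra hfk
    obtain ⟨ε', hε', hbound'⟩ := hsym.exists_forall_ne_norm_apply_le hfk
    linarith [hbound' k₀ hk.symm]
  exact ⟨k₀, hnorm.trans hf, hzero, hsym.apply_of_forall_ne hzero⟩

/-- Necessity: a norm-one left symmetric point of ℓ∞(K, X) is supported at one point. -/
theorem stmt3 (𝕜 K X : Type*) [RCLike 𝕜] [Nonempty K]
    [NormedAddCommGroup X] [NormedSpace 𝕜 X] [CompleteSpace X]
    (f : lp (fun _ : K => X) ∞) (hf : ‖f‖ = 1) (hsym : LeftSymPt 𝕜 f) :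
    ∃ k₀ : K, ‖f k₀‖ = 1 ∧ (∀ k : K, k ≠ k₀ → f k = 0) ∧ LeftSymPt 𝕜 (f k₀) :=
  stmt3_general 𝕜 K X f hf hsym
end

section
/- Let K be a Hausdorff topological space and X a Banach space. There exists a non-zero continuous function in ℓ∞(K, X) that is a left symmetric point of ℓ∞(K, X) if and only if K contains an isolated point and X contains a non-zero left symmetric point. -/
open scoped ENNReal

/-!
If `f` is left symmetric and `f k ≠ 0`, then `f` is not orthogonal to `e = single k (f k)`: were it
so, `e ⊥ f`, yet `‖e - t f‖ < ‖f k‖ = ‖e‖` for small `t > 0`. Hence some `f + c e` has smaller norm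
than `f`, and since it agrees with `f` off `k`, `sup_{j ≠ k} ‖f j‖ < ‖f‖`. Two points in the support
would then give `‖f‖ < ‖f‖`, so `f = single k x`; continuity makes `k` isolated, and `x` is left
symmetric because `single k` is a linear isometry.

Conversely, let `x` be left symmetric and `single k x ⊥ g`. For small `c` the coordinates `j ≠ k`
of `single k x + c g` are below `‖x‖`, so `‖x + c g k‖ ≥ ‖x‖` near `c = 0`, and by convexity of
`c ↦ ‖x + c g k‖` for all `c`. Thus `x ⊥ g k`, so `g k ⊥ x`, which gives `g ⊥ single k x`.
-/

open Topology

section BirkhoffJames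

variable {𝕜 X Y : Type*} [RCLike 𝕜] [NormedAddCommGroup X] [NormedSpace 𝕜 X]
  [NormedAddCommGroup Y] [NormedSpace 𝕜 Y]

theorem convexOn_norm_add_smul (x y : X) :
    ConvexOn ℝ Set.univ (fun c : 𝕜 => ‖x + c • y‖) := by
  refine ⟨convex_univ, fun c _ d _ a b ha hb hab => ?_⟩
  have hsplit : x + (a • c + b • d) • y = (a : 𝕜) • (x + c • y) + (b : 𝕜) • (x + d • y) := by
    have hab' : (a : 𝕜) + b = 1 := by exact_mod_cast hab
    rw [RCLike.real_smul_eq_coe_mul, RCLike.real_smul_eq_coe_mul]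
    conv_lhs => rw [← one_smul 𝕜 x, ← hab']
    module
  calc ‖x + (a • c + b • d) • y‖
      ≤ ‖(a : 𝕜) • (x + c • y)‖ + ‖(b : 𝕜) • (x + d • y)‖ := hsplit ▸ norm_add_le _ _
    _ = a • ‖x + c • y‖ + b • ‖x + d • y‖ := by
      simp only [norm_smul, RCLike.norm_ofReal, abs_of_nonneg ha, abs_of_nonneg hb, smul_eq_mul]

theorem bjOrth_of_isLocalMin {x y : X} (h : IsLocalMin (fun c : 𝕜 => ‖x + c • y‖) 0) :
    BJOrth 𝕜 x y := fun c => by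
  simpa using IsMinOn.of_isLocalMin_of_convex_univ h (convexOn_norm_add_smul x y) c

theorem LinearIsometry.bjOrth_map_iff (L : X →ₗᵢ[𝕜] Y) {x y : X} :
    BJOrth 𝕜 (L x) (L y) ↔ BJOrth 𝕜 x y := by
  simp only [BJOrth, ← map_smul, ← map_add, L.norm_map]

theorem leftSymPt_of_map (L : X →ₗᵢ[𝕜] Y) {x : X} (h : LeftSymPt 𝕜 (L x)) : LeftSymPt 𝕜 x :=
  fun y hxy => L.bjOrth_map_iff.1 (h (L y) (L.bjOrth_map_iff.2 hxy))

end BirkhoffJames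

theorem continuous_pi_single_iff {K X : Type*} [TopologicalSpace K] [T1Space K]
    [TopologicalSpace X] [T1Space X] [Zero X] [DecidableEq K] {k : K} {x : X} (hx : x ≠ 0) :
    Continuous (Pi.single k x : K → X) ↔ IsOpen ({k} : Set K) := by
  refine ⟨fun h => ?_, fun hk => ?_⟩
  · convert (isOpen_compl_singleton (x := (0 : X))).preimage h
    ext j
    by_cases hj : j = k <;> simp [hj, hx]
  · rw [← Set.indicator_singleton k (fun _ => x)]
    exact (show IsClopen {k} from ⟨isClosed_singleton, hk⟩).continuous_indicator continuous_const

namespace lp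

variable {K : Type*} [DecidableEq K]

def singleLinearIsometry (𝕜 : Type*) [NormedRing 𝕜] {E : K → Type*}
    [∀ k, NormedAddCommGroup (E k)] [∀ k, Module 𝕜 (E k)] [∀ k, IsBoundedSMul 𝕜 (E k)]
    {p : ℝ≥0∞} [Fact (1 ≤ p)] (k : K) : E k →ₗᵢ[𝕜] lp E p where
  __ := lp.lsingle p k
  norm_map' := lp.norm_single (zero_lt_one.trans_le Fact.out) k

section NormedAddCommGroup

variable {X : Type*} [NormedAddCommGroup X]

theorem norm_single_add_le (k : K) (x : X) (g : lp (fun _ : K => X) ∞) :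
    ‖lp.single ∞ k x + g‖ ≤ max ‖x + g k‖ ‖g‖ := by
  refine lp.norm_le_of_forall_le (le_max_of_le_right (norm_nonneg _)) fun j => ?_
  rcases eq_or_ne j k with rfl | hj
  · simp
  · simpa only [lp.coeFn_add, Pi.add_apply, lp.single_apply_ne _ _ _ hj, zero_add] using
      le_max_of_le_right (lp.norm_apply_le_norm ENNReal.top_ne_zero g j)

theorem norm_apply_le_norm_add_single (g : lp (fun _ : K => X) ∞) (x : X) {j k : K}
    (hjk : j ≠ k) : ‖g j‖ ≤ ‖g + lp.single ∞ k x‖ := by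
  have h := lp.norm_apply_le_norm ENNReal.top_ne_zero (g + lp.single ∞ k x) j
  rwa [lp.coeFn_add, Pi.add_apply, lp.single_apply_ne _ _ _ hjk, add_zero] at h

theorem norm_le_norm_add_single (g : lp (fun _ : K => X) ∞) {k : K} {x : X}
    (h : ‖g k‖ ≤ ‖g k + x‖) : ‖g‖ ≤ ‖g + lp.single ∞ k x‖ := by
  refine lp.norm_le_of_forall_le (norm_nonneg _) fun j => ?_
  rcases eq_or_ne j k with rfl | hj
  · have hj := lp.norm_apply_le_norm ENNReal.top_ne_zero (g + lp.single ∞ j x) j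
    rw [lp.coeFn_add, Pi.add_apply, lp.single_apply_self] at hj
    exact h.trans hj
  · exact norm_apply_le_norm_add_single g x hj

end NormedAddCommGroup

variable {𝕜 X : Type*} [RCLike 𝕜] [NormedAddCommGroup X] [NormedSpace 𝕜 X]

theorem bjOrth_apply_of_bjOrth_single {k : K} {x : X} {g : lp (fun _ : K => X) ∞}
    (h : BJOrth 𝕜 (lp.single ∞ k x) g) : BJOrth 𝕜 x (g k) := by
  rcases eq_or_ne x 0 with rfl | hx
  · simp [BJOrth]
  refine bjOrth_of_isLocalMin ?_
  have hsmall : ∀ᶠ c : 𝕜 in 𝓝 0, ‖c‖ * ‖g‖ < ‖x‖ := by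
    exact ((continuous_norm.mul continuous_const).tendsto' (0 : 𝕜) 0 (by simp)).eventually
      (eventually_lt_nhds (norm_pos_iff.2 hx))
  filter_upwards [hsmall] with c hc
  have hle := (h c).trans (norm_single_add_le k x (c • g))
  rw [lp.norm_single ENNReal.zero_lt_top, norm_smul] at hle
  simpa [hc.not_ge] using hle

theorem bjOrth_single_of_bjOrth_apply {k : K} {x : X} {g : lp (fun _ : K => X) ∞}
    (h : BJOrth 𝕜 (g k) x) : BJOrth 𝕜 g (lp.single ∞ k x) := fun c => by
  rw [← lp.single_smul]
  exact norm_le_norm_add_single g (h c)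

theorem leftSymPt_single {x : X} (hx : LeftSymPt 𝕜 x) (k : K) :
    LeftSymPt 𝕜 (lp.single ∞ k x : lp (fun _ : K => X) ∞) := fun _ h =>
  bjOrth_single_of_bjOrth_apply (hx _ (bjOrth_apply_of_bjOrth_single h))

theorem not_bjOrth_single_apply {f : lp (fun _ : K => X) ∞} {k : K} (hk : f k ≠ 0) :
    ¬ BJOrth 𝕜 (lp.single ∞ k (f k)) f := by
  intro h
  have hfk : 0 < ‖f k‖ := norm_pos_iff.2 hk
  have hf : ‖f k‖ ≤ ‖f‖ := lp.norm_apply_le_norm ENNReal.top_ne_zero f k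
  have hf0 : 0 < ‖f‖ := hfk.trans_le hf
  set t : ℝ := ‖f k‖ / (2 * ‖f‖)
  have ht : 0 < t := by positivity
  have ht1 : t < 1 := by unfold t; rw [div_lt_one (by positivity)]; linarith
  have htf : t * ‖f‖ = ‖f k‖ / 2 := by unfold t; field_simp
  have hcoeff : f k + ((-t : ℝ) : 𝕜) • f k = ((1 - t : ℝ) : 𝕜) • f k := by push_cast; module
  have hlt : ‖lp.single ∞ k (f k) + ((-t : ℝ) : 𝕜) • f‖ < ‖f k‖ := calc
    _ ≤ max ‖f k + (((-t : ℝ) : 𝕜) • f) k‖ ‖((-t : ℝ) : 𝕜) • f‖ := norm_single_add_le k (f k) _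
    _ = max ((1 - t) * ‖f k‖) (‖f k‖ / 2) := by
      rw [lp.coeFn_smul, Pi.smul_apply, hcoeff, norm_smul, norm_smul, RCLike.norm_ofReal,
        RCLike.norm_ofReal, abs_of_pos (by linarith), abs_neg, abs_of_pos ht, htf]
    _ < ‖f k‖ := max_lt (by nlinarith) (by linarith)
  exact hlt.not_ge (by simpa [lp.norm_single ENNReal.zero_lt_top] using h ((-t : ℝ) : 𝕜))

theorem exists_lt_norm_forall_ne_le_of_leftSymPt {f : lp (fun _ : K => X) ∞} (hf : LeftSymPt 𝕜 f)
    {k : K} (hk : f k ≠ 0) : ∃ B < ‖f‖, ∀ j ≠ k, ‖f j‖ ≤ B := by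
  obtain ⟨c, hc⟩ : ∃ c : 𝕜, ‖f + c • lp.single ∞ k (f k)‖ < ‖f‖ := by
    simpa [BJOrth] using mt (hf _) (not_bjOrth_single_apply hk)
  refine ⟨_, hc, fun j hj => ?_⟩
  rw [← lp.single_smul]
  exact norm_apply_le_norm_add_single f _ hj

theorem eq_single_of_leftSymPt {f : lp (fun _ : K => X) ∞} (hf : LeftSymPt 𝕜 f) {k : K}
    (hk : f k ≠ 0) : f = lp.single ∞ k (f k) := by
  obtain ⟨B, hB, hBk⟩ := exists_lt_norm_forall_ne_le_of_leftSymPt hf hk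
  ext j
  rcases eq_or_ne j k with rfl | hjk
  · simp
  rw [lp.single_apply_ne _ _ _ hjk]
  by_contra hj
  obtain ⟨C, hC, hCj⟩ := exists_lt_norm_forall_ne_le_of_leftSymPt hf hj
  have hfBC : ‖f‖ ≤ max B C := by
    refine lp.norm_le_of_forall_le ((norm_nonneg _).trans (le_max_of_le_left (hBk j hjk)))
      fun i => ?_
    rcases eq_or_ne i k with rfl | hik
    · exact le_max_of_le_right (hCj i hjk.symm)
    · exact le_max_of_le_left (hBk i hik)
  exact (max_lt hB hC).not_ge hfBC

end lp

theorem stmt4_general (𝕜 K X : Type*) [RCLike 𝕜] [TopologicalSpace K] [T2Space K]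
    [NormedAddCommGroup X] [NormedSpace 𝕜 X] :
    (∃ f : lp (fun _ : K => X) ∞, f ≠ 0 ∧ Continuous (fun k : K => f k) ∧ LeftSymPt 𝕜 f) ↔
      ((∃ k : K, IsOpen ({k} : Set K)) ∧ ∃ x : X, x ≠ 0 ∧ LeftSymPt 𝕜 x) := by
  classical
  constructor
  · rintro ⟨f, hf0, hfc, hfs⟩
    obtain ⟨k, hk⟩ : ∃ k, f k ≠ 0 := by
      by_contra! h
      exact hf0 (lp.ext (funext h))
    have hf := lp.eq_single_of_leftSymPt hfs hk
    rw [hf] at hfc hfs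
    refine ⟨⟨k, (continuous_pi_single_iff hk).1 hfc⟩, f k, hk, ?_⟩
    exact leftSymPt_of_map (lp.singleLinearIsometry 𝕜 (E := fun _ : K => X) (p := ∞) k) hfs
  · rintro ⟨⟨k, hk⟩, x, hx0, hxs⟩
    refine ⟨lp.single ∞ k x, ?_, (continuous_pi_single_iff hx0).2 hk, lp.leftSymPt_single hxs k⟩
    rw [← norm_ne_zero_iff, lp.norm_single ENNReal.zero_lt_top]
    exact norm_ne_zero_iff.2 hx0

/-- Existence of a non-zero continuous left symmetric function in ℓ∞(K, X) iff K has an isolated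
point and X has a non-zero left symmetric point. -/
theorem stmt4 (𝕜 K X : Type*) [RCLike 𝕜] [TopologicalSpace K] [T2Space K]
    [NormedAddCommGroup X] [NormedSpace 𝕜 X] [CompleteSpace X] :
    (∃ f : lp (fun _ : K => X) ∞, f ≠ 0 ∧ Continuous (fun k : K => f k) ∧ LeftSymPt 𝕜 f) ↔
      ((∃ k : K, IsOpen ({k} : Set K)) ∧ ∃ x : X, x ≠ 0 ∧ LeftSymPt 𝕜 x) :=
  stmt4_general 𝕜 K X
end

section
/- Let K be a non-empty set and X a Banach space. If f ∈ ℓ∞(K, X) with ||f|| = 1 is a right symmetric point of ℓ∞(K, X), then ||f(k)|| = 1 for every k ∈ K and f(k) is a right symmetric point of X for every k ∈ K. -/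
/-!
Write `g ⊥ f` for Birkhoff–James orthogonality. Both claims are proved by modifying `f` at one
coordinate `k` to get some `g` with `g ⊥ f` (witnessed at `k` or by the sup norm) while
`‖f + c • g‖ < ‖f‖` for some `c`, so that `f ⊥ g` fails.

If `‖f k‖ < ‖f‖`, let `g` be `f` with `f k` replaced by a vector `u` of norm `‖f‖` pointing
away from `f k`. For `re c ≤ 0` the coordinate `k` shows `‖g + c • f‖ ≥ ‖f‖`. For `re c > 0` the
other coordinates give this, because they alone already attain `‖f‖`. On the other hand
`f - ε • g` is `(1 - ε) • f` away from `k`, and at `k` it has norm below `‖f‖`.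

If `y ⊥ f k` but `‖f k + z‖ < ‖f k‖` for `z = c • y`, let `g` be `-ε • f` with `f k` replaced
by `z`. Then `g ⊥ f` is witnessed at `k`, and `f + g` is `(1 - ε) • f` away from `k`.
-/

open scoped ENNReal

section Orthogonality

variable {𝕜 X : Type*} [RCLike 𝕜] [NormedAddCommGroup X] [NormedSpace 𝕜 X]

theorem BJOrth.smul_left {x y : X} (h : BJOrth 𝕜 y x) (a : 𝕜) : BJOrth 𝕜 (a • y) x := by
  intro c
  rcases eq_or_ne a 0 with rfl | ha
  · simp
  calc ‖a • y‖ = ‖a‖ * ‖y‖ := norm_smul a y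
    _ ≤ ‖a‖ * ‖y + (a⁻¹ * c) • x‖ := mul_le_mul_of_nonneg_left (h _) (norm_nonneg a)
    _ = ‖a • y + c • x‖ := by rw [← norm_smul, smul_add, smul_smul, mul_inv_cancel_left₀ ha]

theorem RCLike.norm_one_sub_ofReal_lt_one {ε : ℝ} (h0 : 0 < ε) (h2 : ε < 2) :
    ‖(1 : 𝕜) - ε‖ < 1 := by
  rw [← RCLike.ofReal_one, ← RCLike.ofReal_sub, RCLike.norm_ofReal, abs_sub_lt_iff]
  constructor <;> linarith

theorem norm_ofReal_div_norm_smul_self (r : ℝ) {w : X} (hw : w ≠ 0) :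
    ‖((r / ‖w‖ : ℝ) : 𝕜) • w‖ = |r| := by
  rw [norm_smul, RCLike.norm_ofReal, abs_div, abs_norm, div_mul_cancel₀ _ (norm_ne_zero_iff.2 hw)]

theorem exists_norm_eq_le_norm_add_smul [Nontrivial X] (x : X) {r : ℝ} (hr : 0 ≤ r) :
    ∃ u : X, ‖u‖ = r ∧ ∀ c : 𝕜, RCLike.re c ≤ 0 → r ≤ ‖u + c • x‖ := by
  rcases eq_or_ne x 0 with rfl | hx
  · obtain ⟨w, hw⟩ := exists_ne (0 : X)
    have hu : ‖((r / ‖w‖ : ℝ) : 𝕜) • w‖ = r := by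
      rw [norm_ofReal_div_norm_smul_self r hw, abs_of_nonneg hr]
    exact ⟨_, hu, fun c _ => by rw [smul_zero, add_zero, hu]⟩
  set a : 𝕜 := ((r / ‖x‖ : ℝ) : 𝕜)
  refine ⟨-(a • x), by rw [norm_neg, norm_ofReal_div_norm_smul_self r hx, abs_of_nonneg hr],
    fun c hc => ?_⟩
  have hx' : 0 < ‖x‖ := norm_pos_iff.2 hx
  have ha : r / ‖x‖ ≤ ‖c - a‖ := by
    rw [norm_sub_rev]
    refine le_trans ?_ (RCLike.re_le_norm _)
    rw [map_sub, RCLike.ofReal_re]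
    linarith
  calc r = r / ‖x‖ * ‖x‖ := (div_mul_cancel₀ r hx'.ne').symm
    _ ≤ ‖c - a‖ * ‖x‖ := mul_le_mul_of_nonneg_right ha hx'.le
    _ = ‖-(a • x) + c • x‖ := by rw [← norm_smul, sub_smul, neg_add_eq_sub]

end Orthogonality

namespace lp

section Family

variable {K : Type*} {E : K → Type*} [∀ k, NormedAddCommGroup (E k)]

theorem add_apply {p : ℝ≥0∞} (f g : lp E p) (j : K) : (f + g) j = f j + g j :=
  rfl

theorem smul_apply {𝕜 : Type*} [NormedRing 𝕜] [∀ k, Module 𝕜 (E k)] [∀ k, IsBoundedSMul 𝕜 (E k)]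
    {p : ℝ≥0∞} [Fact (1 ≤ p)] (c : 𝕜) (f : lp E p) (j : K) : (c • f) j = c • f j :=
  rfl

theorem norm_le_of_norm_apply_lt {f : lp E ∞} {k : K} (hk : ‖f k‖ < ‖f‖) {C : ℝ}
    (hC : ∀ j ≠ k, ‖f j‖ ≤ C) : ‖f‖ ≤ C := by
  have hmax : ‖f‖ ≤ max ‖f k‖ C := by
    refine norm_le_of_forall_le ((norm_nonneg _).trans (le_max_left _ _)) fun j => ?_
    rcases eq_or_ne j k with rfl | hj
    · exact le_max_left _ _
    · exact le_max_of_le_right (hC j hj)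
  rcases max_cases ‖f k‖ C with ⟨h, -⟩ | ⟨h, -⟩ <;> rw [h] at hmax
  · exact absurd hmax hk.not_ge
  · exact hmax

variable [DecidableEq K]

def update (f : lp E ∞) (k : K) (x : E k) : lp E ∞ :=
  ⟨Function.update f k x, memℓp_infty ⟨max ‖x‖ ‖f‖, by
    rintro _ ⟨j, rfl⟩
    rcases eq_or_ne j k with rfl | hj
    · simp
    · simpa [hj] using le_max_of_le_right (norm_apply_le_norm ENNReal.top_ne_zero f j)⟩⟩

theorem update_apply_self (f : lp E ∞) (k : K) (x : E k) : lp.update f k x k = x :=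
  Function.update_self k x f

theorem update_apply_of_ne (f : lp E ∞) {j k : K} (h : j ≠ k) (x : E k) :
    lp.update f k x j = f j :=
  Function.update_of_ne h x f

theorem norm_update_le {f : lp E ∞} {k : K} {x : E k} {C : ℝ} (hx : ‖x‖ ≤ C)
    (hf : ∀ j ≠ k, ‖f j‖ ≤ C) : ‖lp.update f k x‖ ≤ C := by
  refine norm_le_of_forall_le ((norm_nonneg x).trans hx) fun j => ?_
  rcases eq_or_ne j k with rfl | hj
  · rwa [update_apply_self]
  · rw [update_apply_of_ne f hj]
    exact hf j hj

variable {𝕜 : Type*} [RCLike 𝕜] [∀ k, NormedSpace 𝕜 (E k)]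

theorem add_smul_update_smul (f : lp E ∞) (c s : 𝕜) (k : K) (w : E k) :
    f + c • lp.update (s • f) k w = lp.update ((1 + c * s) • f) k (f k + c • w) := by
  ext j
  rcases eq_or_ne j k with rfl | hj
  · rw [add_apply, smul_apply, update_apply_self, update_apply_self]
  · rw [add_apply, smul_apply, update_apply_of_ne _ hj, update_apply_of_ne _ hj,
      smul_apply, smul_apply, add_smul, one_smul, mul_smul]

theorem norm_update_smul_lt {f : lp E ∞} {k : K} {w : E k} {a : 𝕜} (ha : ‖a‖ < 1)
    (hw : ‖w‖ < ‖f‖) : ‖lp.update (a • f) k w‖ < ‖f‖ := by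
  have hf : 0 < ‖f‖ := (norm_nonneg w).trans_lt hw
  refine (norm_update_le (le_max_left ‖w‖ (‖a‖ * ‖f‖)) fun j _ => ?_).trans_lt
    (max_lt hw (mul_lt_of_lt_one_left hf ha))
  exact le_max_of_le_right
    ((norm_apply_le_norm ENNReal.top_ne_zero (a • f) j).trans (norm_smul_le a f))

end Family

-- A constant family: if some fibre `E k` is trivial, `‖f k‖ = ‖f‖` can fail.
variable {𝕜 K X : Type*} [RCLike 𝕜] [NormedAddCommGroup X] [NormedSpace 𝕜 X]
  {f : lp (fun _ : K => X) ∞}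

section Update

variable [DecidableEq K] {k : K}

theorem bjOrth_update_of_norm_apply_lt (hk : ‖f k‖ < ‖f‖) {u : X} (hu : ‖u‖ = ‖f‖)
    (hcone : ∀ c : 𝕜, RCLike.re c ≤ 0 → ‖f‖ ≤ ‖u + c • f k‖) :
    BJOrth 𝕜 (lp.update f k u) f := by
  intro c
  refine (norm_update_le hu.le fun j _ => norm_apply_le_norm ENNReal.top_ne_zero f j).trans ?_
  rcases le_or_gt (RCLike.re c) 0 with hc | hc
  · calc ‖f‖ ≤ ‖u + c • f k‖ := hcone c hc
      _ = ‖(lp.update f k u + c • f) k‖ := by rw [add_apply, smul_apply, update_apply_self]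
      _ ≤ _ := norm_apply_le_norm ENNReal.top_ne_zero _ k
  · refine norm_le_of_norm_apply_lt hk fun j hj => ?_
    have h1c : 1 ≤ ‖1 + c‖ := by
      refine le_trans ?_ (RCLike.re_le_norm _)
      rw [map_add, RCLike.one_re]
      linarith
    calc ‖f j‖ ≤ ‖1 + c‖ * ‖f j‖ := le_mul_of_one_le_left (norm_nonneg _) h1c
      _ = ‖(lp.update f k u + c • f) j‖ := by
        rw [add_apply, smul_apply, update_apply_of_ne f hj, ← norm_smul, add_smul, one_smul]
      _ ≤ _ := norm_apply_le_norm ENNReal.top_ne_zero _ j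

theorem not_bjOrth_update (hk : ‖f k‖ < ‖f‖) {u : X} (hu : ‖u‖ ≤ ‖f‖) :
    ¬ BJOrth 𝕜 f (lp.update f k u) := by
  intro h
  have hf : 0 < ‖f‖ := (norm_nonneg _).trans_lt hk
  obtain ⟨ε, hε0, hε2, hεf⟩ : ∃ ε : ℝ, 0 < ε ∧ ε < 2 ∧ ε * ‖f‖ < ‖f‖ - ‖f k‖ := by
    refine ⟨(‖f‖ - ‖f k‖) / (2 * ‖f‖), by positivity, ?_, ?_⟩
    · rw [div_lt_iff₀ (by positivity)]
      linarith [norm_nonneg (f k)]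
    · rw [div_mul_eq_mul_div, mul_div_mul_right _ _ hf.ne']
      linarith
  have hcoord : ‖f k + (-ε : 𝕜) • u‖ < ‖f‖ :=
    calc ‖f k + (-ε : 𝕜) • u‖ ≤ ‖f k‖ + ε * ‖u‖ := by
          refine (norm_add_le _ _).trans_eq ?_
          rw [norm_smul, _root_.norm_neg, RCLike.norm_ofReal, abs_of_pos hε0]
      _ ≤ ‖f k‖ + ε * ‖f‖ := by gcongr
      _ < ‖f‖ := by linarith
  have key : ‖f‖ ≤ ‖f + (-ε : 𝕜) • lp.update ((1 : 𝕜) • f) k u‖ := by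
    simpa only [one_smul] using h (-ε)
  rw [add_smul_update_smul, mul_one, ← sub_eq_add_neg] at key
  exact key.not_gt (norm_update_smul_lt (RCLike.norm_one_sub_ofReal_lt_one hε0 hε2) hcoord)

theorem bjOrth_update_smul {y : X} (hy : BJOrth 𝕜 y (f k)) {s : 𝕜} (hs : ‖s‖ * ‖f‖ ≤ ‖y‖) :
    BJOrth 𝕜 (lp.update (s • f) k y) f := by
  intro c
  calc ‖lp.update (s • f) k y‖ ≤ ‖y‖ := norm_update_le le_rfl fun j _ =>
        ((norm_apply_le_norm ENNReal.top_ne_zero _ j).trans (norm_smul_le s f)).trans hs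
    _ ≤ ‖y + c • f k‖ := hy c
    _ = ‖(lp.update (s • f) k y + c • f) k‖ := by rw [add_apply, smul_apply, update_apply_self]
    _ ≤ _ := norm_apply_le_norm ENNReal.top_ne_zero _ k

theorem not_bjOrth_update_smul {z : X} (hz : ‖f k + z‖ < ‖f‖) {ε : ℝ} (hε0 : 0 < ε)
    (hε2 : ε < 2) : ¬ BJOrth 𝕜 f (lp.update ((-ε : 𝕜) • f) k z) := by
  intro h
  have key := h 1
  rw [add_smul_update_smul, one_mul, one_smul, ← sub_eq_add_neg] at key
  exact key.not_gt (norm_update_smul_lt (RCLike.norm_one_sub_ofReal_lt_one hε0 hε2) hz)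

end Update

theorem norm_apply_eq_norm_of_rightSymPt (hf : RightSymPt 𝕜 f) (k : K) : ‖f k‖ = ‖f‖ := by
  classical
  by_contra hne
  have hk : ‖f k‖ < ‖f‖ := (norm_apply_le_norm ENNReal.top_ne_zero f k).lt_of_ne hne
  have : Nontrivial X := by
    obtain ⟨j, hj⟩ : ∃ j, f j ≠ 0 := by
      by_contra! h
      have : f = 0 := lp.ext (funext h)
      simp [this] at hk
    exact nontrivial_of_ne _ _ hj
  obtain ⟨u, hu, hcone⟩ := exists_norm_eq_le_norm_add_smul (𝕜 := 𝕜) (f k) (norm_nonneg f)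
  exact not_bjOrth_update hk hu.le (hf _ (bjOrth_update_of_norm_apply_lt hk hu hcone))

theorem rightSymPt_apply (hf : RightSymPt 𝕜 f) (k : K) : RightSymPt 𝕜 (f k) := by
  classical
  have hk := norm_apply_eq_norm_of_rightSymPt hf k
  intro y hy c
  by_contra! hlt
  obtain ⟨z, hz, hzf⟩ : ∃ z, BJOrth 𝕜 z (f k) ∧ ‖f k + z‖ < ‖f‖ :=
    ⟨c • y, hy.smul_left c, hk ▸ hlt⟩
  have hz0 : 0 < ‖z‖ := norm_pos_iff.2 fun h => by rw [h, add_zero, hk] at hzf; exact hzf.false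
  obtain ⟨ε, hε0, hε1, hεf⟩ : ∃ ε : ℝ, 0 < ε ∧ ε < 1 ∧ ε * ‖f‖ ≤ ‖z‖ := by
    refine ⟨‖z‖ / (‖z‖ + ‖f‖), by positivity, (div_lt_one (by positivity)).2 ?_, ?_⟩
    · linarith [(norm_nonneg _).trans_lt hzf]
    · rw [div_mul_eq_mul_div, div_le_iff₀ (by positivity)]
      nlinarith
  have hs : ‖(-ε : 𝕜)‖ * ‖f‖ ≤ ‖z‖ := by
    rwa [_root_.norm_neg, RCLike.norm_ofReal, abs_of_pos hε0]
  exact not_bjOrth_update_smul hzf hε0 (by linarith) (hf _ (bjOrth_update_smul hz hs))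

end lp

theorem stmt5_general (𝕜 K X : Type*) [RCLike 𝕜]
    [NormedAddCommGroup X] [NormedSpace 𝕜 X]
    (f : lp (fun _ : K => X) ∞) (hf : ‖f‖ = 1) (hsym : RightSymPt 𝕜 f) :
    ∀ k : K, ‖f k‖ = 1 ∧ RightSymPt 𝕜 (f k) :=
  fun k => ⟨(lp.norm_apply_eq_norm_of_rightSymPt hsym k).trans hf, lp.rightSymPt_apply hsym k⟩

/-- A norm-one right symmetric point f of ℓ∞(K, X) satisfies ‖f(k)‖ = 1 and f(k) right symmetric
for every k. -/
theorem stmt5 (𝕜 K X : Type*) [RCLike 𝕜] [Nonempty K]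
    [NormedAddCommGroup X] [NormedSpace 𝕜 X] [CompleteSpace X]
    (f : lp (fun _ : K => X) ∞) (hf : ‖f‖ = 1) (hsym : RightSymPt 𝕜 f) :
    ∀ k : K, ‖f k‖ = 1 ∧ RightSymPt 𝕜 (f k) :=
  stmt5_general 𝕜 K X f hf hsym
end

section
/- Let K be a non-empty set with |K| > 1 and X a Banach space. Then the only element of ℓ∞(K, X) that is both left symmetric and right symmetric is the zero function. -/
open scoped ENNReal

/-!
Let `f ≠ 0`, pick `k₀` with `f k₀ ≠ 0` and put `g = single k₀ (f k₀)`. The basic observation is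
that if `x` peaks strictly at `k₀` (`‖x k‖ ≤ M < ‖x‖` for `k ≠ k₀`) and `y k₀ = x k₀`, then
`‖x - s y‖ < ‖x‖` for small `s > 0`, so `x` is not orthogonal to `y`.

If `f ⊥ g`, left symmetry gives `g ⊥ f`, which the observation rules out since `g` peaks strictly
at `k₀`. Otherwise `‖f + c g‖ < ‖f‖` for some `c`, so `f` itself peaks strictly at `k₀`. Take
`k₁ ≠ k₀`, write `f k₁ = ‖f k₁‖ • u` with `‖u‖ = 1`, and let `y` agree with `f` at `k₀`, equal
`-‖f‖ • u` at `k₁` and vanish elsewhere. Then `y ⊥ f`: according to the sign of `re c`, the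
coordinate of `y + c f` at `k₀` or at `k₁` has norm at least `‖f‖`. But `f` is not orthogonal to
`y` by the observation, against right symmetry.
-/

section

variable {𝕜 X : Type*} [RCLike 𝕜] [NormedAddCommGroup X] [NormedSpace 𝕜 X]

theorem not_bjOrth_iff {x y : X} : ¬BJOrth 𝕜 x y ↔ ∃ c : 𝕜, ‖x + c • y‖ < ‖x‖ := by
  simp [BJOrth]

theorem bjOrth_zero_left (y : X) : BJOrth 𝕜 0 y := fun _ => by simp

theorem bjOrth_zero_right (x : X) : BJOrth 𝕜 x 0 := fun _ => by simp

theorem exists_norm_eq_one_and_eq_norm_smul [Nontrivial X] (b : X) :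
    ∃ u : X, ‖u‖ = 1 ∧ b = (‖b‖ : 𝕜) • u := by
  by_cases hb : b = 0
  · obtain ⟨a, ha⟩ := exists_ne (0 : X)
    exact ⟨(‖a‖⁻¹ : 𝕜) • a, norm_smul_inv_norm ha, by simp [hb]⟩
  · refine ⟨(‖b‖⁻¹ : 𝕜) • b, norm_smul_inv_norm hb, ?_⟩
    rw [smul_smul, mul_inv_cancel₀ (by simpa using hb), one_smul]

end

namespace lp

variable {𝕜 K X : Type*} [RCLike 𝕜] [NormedAddCommGroup X] [NormedSpace 𝕜 X]

local notation "ℓ∞" => lp (fun _ : K => X) ∞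

theorem norm_apply_le (f : ℓ∞) (k : K) : ‖f k‖ ≤ ‖f‖ :=
  norm_apply_le_norm ENNReal.top_ne_zero f k

-- The ascriptions to `X` let `rw` act on the coordinates with the instances of `X`.
theorem add_smul_apply_s6 (x y : ℓ∞) (c : 𝕜) (k : K) :
    (x + c • y) k = (x k : X) + c • (y k : X) :=
  rfl

theorem norm_apply_eq_of_forall_ne_norm_apply_le {f : ℓ∞} {k₀ : K} {M : ℝ} (hM : M < ‖f‖)
    (hf : ∀ k ≠ k₀, ‖f k‖ ≤ M) : ‖f k₀‖ = ‖f‖ := by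
  refine (norm_apply_le f k₀).antisymm (not_lt.mp fun hlt => ?_)
  have : ‖f‖ ≤ max ‖f k₀‖ M := by
    refine norm_le_of_forall_le ((norm_nonneg _).trans (le_max_left _ _)) fun k => ?_
    rcases eq_or_ne k k₀ with rfl | hk
    · exact le_max_left _ _
    · exact (hf k hk).trans (le_max_right _ _)
  exact (max_lt hlt hM).not_ge this

theorem not_bjOrth_of_forall_ne_norm_apply_le {x y : ℓ∞} {k₀ : K} {M : ℝ} (hM₀ : 0 ≤ M)
    (hM : M < ‖x‖) (hx : ∀ k ≠ k₀, ‖x k‖ ≤ M) (hy₀ : y k₀ = x k₀) : ¬BJOrth 𝕜 x y := by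
  have hxy : 0 < ‖x‖ + ‖y‖ := by linarith [norm_nonneg y]
  set s := (‖x‖ - M) / (2 * (‖x‖ + ‖y‖))
  have hs₀ : 0 < s := div_pos (by linarith) (by positivity)
  have hs : s * (‖x‖ + ‖y‖) = (‖x‖ - M) / 2 := by simp only [s]; field_simp
  have hs₁ : s ≤ 1 :=
    le_of_mul_le_mul_right (by rw [hs, one_mul]; linarith [norm_nonneg y]) hxy
  have hns : ‖-(s : 𝕜)‖ = s := by simp [abs_of_pos hs₀]
  rw [not_bjOrth_iff]
  refine ⟨-(s : 𝕜), (norm_le_of_forall_le (C := max ((1 - s) * ‖x‖) (M + s * ‖y‖))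
    (le_max_of_le_right (by positivity)) fun k => ?_).trans_lt
    (max_lt (by nlinarith) (by nlinarith [norm_nonneg x]))⟩
  rw [add_smul_apply_s6]
  rcases eq_or_ne k k₀ with rfl | hk
  · have : x k + -(s : 𝕜) • x k = ((1 - s : ℝ) : 𝕜) • x k := by
      rw [RCLike.ofReal_sub, RCLike.ofReal_one, sub_eq_add_neg, add_smul, one_smul]
    rw [hy₀, this, norm_smul, RCLike.norm_ofReal, abs_of_nonneg (by linarith)]
    exact le_max_of_le_left (mul_le_mul_of_nonneg_left (norm_apply_le x k) (by linarith))
  · calc ‖x k + -(s : 𝕜) • y k‖ ≤ ‖x k‖ + s * ‖y k‖ := by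
          simpa only [norm_smul, hns] using norm_add_le (x k) (-(s : 𝕜) • y k)
      _ ≤ M + s * ‖y‖ := by gcongr; exacts [hx k hk, norm_apply_le y k]
      _ ≤ _ := le_max_right _ _

theorem bjOrth_of_norm_le_of_apply_eq {f y : ℓ∞} {k₀ k₁ : K} {u : X} {r : ℝ}
    (hf₀ : ‖f k₀‖ = ‖f‖) (hr : 0 ≤ r) (hf₁ : f k₁ = (r : 𝕜) • u) (hu : ‖u‖ = 1)
    (hy : ‖y‖ ≤ ‖f‖) (hy₀ : y k₀ = f k₀) (hy₁ : y k₁ = -(‖f‖ : 𝕜) • u) : BJOrth 𝕜 y f := by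
  intro c
  refine hy.trans ?_
  rcases le_or_gt 0 (RCLike.re c) with hc | hc
  · have h1 : 1 ≤ ‖1 + c‖ := by
      have := RCLike.re_le_norm (1 + c)
      rw [map_add, RCLike.one_re] at this
      linarith
    calc ‖f‖ = ‖f k₀‖ := hf₀.symm
      _ ≤ ‖1 + c‖ * ‖f k₀‖ := le_mul_of_one_le_left (norm_nonneg _) h1
      _ = ‖(1 + c) • f k₀‖ := (norm_smul _ _).symm
      _ = ‖(y + c • f) k₀‖ := by rw [add_smul_apply_s6, hy₀, add_smul, one_smul]
      _ ≤ ‖y + c • f‖ := norm_apply_le _ _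
  · have hk₁ : (y + c • f) k₁ = (c * r - ‖f‖) • u := by
      rw [add_smul_apply_s6, hy₁, hf₁, smul_smul, sub_smul, neg_smul, neg_add_eq_sub]
    calc ‖f‖ ≤ ‖f‖ - RCLike.re c * r := by nlinarith
      _ = -RCLike.re (c * r - ‖f‖) := by simp
      _ ≤ ‖c * r - ‖f‖‖ := (neg_le_abs _).trans (RCLike.abs_re_le_norm _)
      _ = ‖(y + c • f) k₁‖ := by rw [hk₁, norm_smul, hu, mul_one]
      _ ≤ ‖y + c • f‖ := norm_apply_le _ _

variable [DecidableEq K]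

theorem not_bjOrth_single_apply_self {f : ℓ∞} {k₀ : K} (hk₀ : f k₀ ≠ 0) :
    ¬BJOrth 𝕜 (lp.single ∞ k₀ (f k₀)) f :=
  not_bjOrth_of_forall_ne_norm_apply_le (k₀ := k₀) le_rfl
    (by rwa [lp.norm_single ENNReal.zero_lt_top, norm_pos_iff])
    (fun k hk => by simp [hk]) (by simp)

theorem exists_lt_norm_forall_ne_norm_apply_le_of_not_bjOrth_single {f : ℓ∞} {k₀ : K} {v : X}
    (h : ¬BJOrth 𝕜 f (lp.single ∞ k₀ v)) : ∃ M < ‖f‖, ∀ k ≠ k₀, ‖f k‖ ≤ M := by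
  obtain ⟨c, hc⟩ := not_bjOrth_iff.mp h
  refine ⟨_, hc, fun k hk => ?_⟩
  calc ‖f k‖ = ‖(f + c • lp.single ∞ k₀ v : ℓ∞) k‖ := by
        rw [add_smul_apply_s6, lp.single_apply_ne _ _ _ hk, smul_zero, add_zero]
    _ ≤ _ := norm_apply_le _ k

theorem not_rightSymPt_of_forall_ne_norm_apply_le {f : ℓ∞} {k₀ k₁ : K} (hk : k₁ ≠ k₀) {M : ℝ}
    (hM : M < ‖f‖) (hf : ∀ k ≠ k₀, ‖f k‖ ≤ M) : ¬RightSymPt 𝕜 f := by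
  have hM₀ : 0 ≤ M := (norm_nonneg _).trans (hf k₁ hk)
  have hf₀ := norm_apply_eq_of_forall_ne_norm_apply_le hM hf
  have : Nontrivial X := nontrivial_of_ne (f k₀) 0 (norm_pos_iff.mp (by linarith))
  obtain ⟨u, hu, hf₁⟩ := exists_norm_eq_one_and_eq_norm_smul (𝕜 := 𝕜) (f k₁)
  set y : ℓ∞ := lp.single ∞ k₀ (f k₀) + lp.single ∞ k₁ (-(‖f‖ : 𝕜) • u)
  have hy_apply (k : K) :
      y k = (Pi.single k₀ (f k₀) : K → X) k + (Pi.single k₁ (-(‖f‖ : 𝕜) • u) : K → X) k :=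
    rfl
  have hy₀ : y k₀ = f k₀ := by simp [hy_apply, hk.symm]
  have hy₁ : y k₁ = -(‖f‖ : 𝕜) • u := by simp [hy_apply, hk]
  have hy : ‖y‖ ≤ ‖f‖ := by
    refine norm_le_of_forall_le (norm_nonneg _) fun k => ?_
    by_cases h₀ : k = k₀
    · rw [h₀, hy₀, hf₀]
    by_cases h₁ : k = k₁
    · rw [h₁, hy₁, norm_smul, hu]
      simp
    · simp [hy_apply, h₀, h₁]
  exact fun hR => not_bjOrth_of_forall_ne_norm_apply_le hM₀ hM hf hy₀
    (hR y (bjOrth_of_norm_le_of_apply_eq hf₀ (norm_nonneg _) hf₁ hu hy hy₀ hy₁))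

end lp

theorem stmt6_general (𝕜 K X : Type*) [RCLike 𝕜] [Nontrivial K]
    [NormedAddCommGroup X] [NormedSpace 𝕜 X]
    (f : lp (fun _ : K => X) ∞) :
    (LeftSymPt 𝕜 f ∧ RightSymPt 𝕜 f) ↔ f = 0 := by
  classical
  refine ⟨fun ⟨hL, hR⟩ => ?_, ?_⟩
  · by_contra hf
    obtain ⟨k₀, hk₀⟩ : ∃ k, f k ≠ 0 := by
      by_contra! h
      exact hf (lp.ext (funext h))
    by_cases h : BJOrth 𝕜 f (lp.single ∞ k₀ (f k₀))
    · exact lp.not_bjOrth_single_apply_self hk₀ (hL _ h)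
    · obtain ⟨M, hM, hfM⟩ := lp.exists_lt_norm_forall_ne_norm_apply_le_of_not_bjOrth_single h
      obtain ⟨k₁, hk₁⟩ := exists_ne k₀
      exact lp.not_rightSymPt_of_forall_ne_norm_apply_le hk₁ hM hfM hR
  · rintro rfl
    exact ⟨fun y _ => bjOrth_zero_right y, fun y _ => bjOrth_zero_left y⟩

/-- If |K| > 1 then the only symmetric point of ℓ∞(K, X) is zero. -/
theorem stmt6 (𝕜 K X : Type*) [RCLike 𝕜] [Nontrivial K]
    [NormedAddCommGroup X] [NormedSpace 𝕜 X] [CompleteSpace X]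
    (f : lp (fun _ : K => X) ∞) :
    (LeftSymPt 𝕜 f ∧ RightSymPt 𝕜 f) ↔ f = 0 :=
  stmt6_general 𝕜 K X f
end

section
/- Let K be a compact Hausdorff space and X a real Banach space. If f ∈ C(K, X) with ||f|| = 1 is a right symmetric point of C(K, X), then ||f(k)|| = 1 for every k ∈ K and f(k) is a right symmetric point of X for every k ∈ K. -/
open scoped ENNReal

/-!
Both claims are proved by contradiction, by producing `g ∈ C(K, X)` with `g ⊥_B f` but
`‖f + c • g‖ < 1 = ‖f‖` for some `c`. Such a `g` is glued with an Urysohn function `φ` from a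
vector `v` at a point `k₀` and a multiple `s • f` away from it; then `f + c • g` is pointwise a
convex combination of `f k + c • v`, small near `k₀`, and `(1 + c s) • f k`, small when
`|1 + c s| < 1`. Orthogonality `g ⊥_B f` holds as soon as `g` attains its norm at points where it
is orthogonal to `f` in `X`. For the second claim `v = y` with `y ⊥_B f k₀` but not
`f k₀ ⊥_B y`; for the first, if `‖f k₀‖ < 1`, `v` is a unit vector pointing against `f k₀`, and
`g = f` at a point where `‖f‖ = 1` is attained.
-/

open Set

section NormedSpace

variable {X : Type*} [NormedAddCommGroup X] [NormedSpace ℝ X]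

theorem inPlus_self (x : X) : InPlus x x := by
  intro t ht
  calc ‖x‖ ≤ (1 + t) * ‖x‖ := le_mul_of_one_le_left (norm_nonneg x) (by linarith)
    _ = ‖x + t • x‖ := by
      rw [← abs_of_nonneg (by linarith : (0 : ℝ) ≤ 1 + t), ← Real.norm_eq_abs, ← norm_smul,
        add_smul, one_smul]

theorem exists_norm_eq_one_inMinus [Nontrivial X] (x : X) : ∃ u : X, ‖u‖ = 1 ∧ InMinus u x := by
  rcases eq_or_ne x 0 with rfl | hx
  · obtain ⟨u, hu⟩ := exists_norm_eq X zero_le_one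
    exact ⟨u, hu, fun t _ => by rw [smul_zero, add_zero]⟩
  · have hx' : 0 < ‖x‖ := norm_pos_iff.2 hx
    have hunit : ‖-‖x‖⁻¹ • x‖ = 1 := by simp [norm_smul, hx'.ne']
    refine ⟨-‖x‖⁻¹ • x, hunit, fun t ht => ?_⟩
    have hcoef : 0 < ‖x‖⁻¹ - t := by linarith [inv_pos.2 hx']
    rw [hunit, show -‖x‖⁻¹ • x + t • x = (‖x‖⁻¹ - t) • -x by module, norm_smul, norm_neg,
      Real.norm_eq_abs, abs_of_pos hcoef, sub_mul, inv_mul_cancel₀ hx'.ne']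
    nlinarith

theorem norm_smul_add_one_sub_smul_le_max {θ : ℝ} (h₀ : 0 ≤ θ) (h₁ : θ ≤ 1) (a b : X) :
    ‖θ • a + (1 - θ) • b‖ ≤ max ‖a‖ ‖b‖ :=
  (convexOn_univ_norm.2 (mem_univ a) (mem_univ b) h₀ (sub_nonneg.2 h₁) (add_sub_cancel θ 1)).trans
    (Convex.combo_le_max _ _ h₀ (sub_nonneg.2 h₁) (add_sub_cancel θ 1))

end NormedSpace

namespace ContinuousMap

theorem exists_norm_apply_eq_norm {K X : Type*} [TopologicalSpace K] [CompactSpace K] [Nonempty K]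
    [NormedAddCommGroup X] (f : C(K, X)) : ∃ k, ‖f k‖ = ‖f‖ := by
  obtain ⟨k, -, hk⟩ := isCompact_univ.exists_isMaxOn univ_nonempty f.continuous.norm.continuousOn
  exact ⟨k, le_antisymm (f.norm_coe_le_norm k) ((f.norm_le (norm_nonneg _)).2 fun x => hk trivial)⟩

variable {K X : Type*} [TopologicalSpace K] [CompactSpace K]
  [NormedAddCommGroup X] [NormedSpace ℝ X]

theorem bjOrth_of_inPlus_of_inMinus {g f : C(K, X)} {k₁ k₂ : K}
    (h₁ : ‖g‖ ≤ ‖g k₁‖) (hplus : InPlus (g k₁) (f k₁))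
    (h₂ : ‖g‖ ≤ ‖g k₂‖) (hminus : InMinus (g k₂) (f k₂)) : BJOrth ℝ g f := by
  intro c
  rcases le_total 0 c with hc | hc
  · exact h₁.trans ((hplus c hc).trans ((g + c • f).norm_coe_le_norm k₁))
  · exact h₂.trans ((hminus c hc).trans ((g + c • f).norm_coe_le_norm k₂))

theorem bjOrth_of_apply {g f : C(K, X)} {k : K} (hk : ‖g‖ ≤ ‖g k‖)
    (horth : BJOrth ℝ (g k) (f k)) : BJOrth ℝ g f :=
  bjOrth_of_inPlus_of_inMinus hk (fun t _ => horth t) hk (fun t _ => horth t)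

theorem exists_bump [T2Space K] (f : C(K, X)) (hf : ‖f‖ ≤ 1) {V : Set K} (hV : IsOpen V)
    {k₀ : K} (hk₀ : k₀ ∈ V) (v : X) {c s : ℝ} (hV_lt : ∀ k ∈ V, ‖f k + c • v‖ < 1)
    (hs : |1 + c * s| < 1) :
    ∃ g : C(K, X), g k₀ = v ∧ (∀ k ∉ V, g k = s • f k) ∧ ‖g‖ ≤ max ‖v‖ |s| ∧
      ‖f + c • g‖ < 1 := by
  obtain ⟨φ, hφV, hφk₀, hφ⟩ := exists_continuous_zero_one_of_isClosed hV.isClosed_compl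
    isClosed_singleton (disjoint_singleton_right.2 (not_not_intro hk₀))
  let g : C(K, X) := ⟨fun k => φ k • v + (1 - φ k) • s • f k, by fun_prop⟩
  have hf_apply (k : K) : ‖f k‖ ≤ 1 := (f.norm_coe_le_norm k).trans hf
  refine ⟨g, ?_, fun k hk => ?_, ?_, ?_⟩
  · simp [g, hφk₀ rfl]
  · simp [g, hφV hk]
  · refine (g.norm_le (by positivity)).2 fun k => ?_
    obtain ⟨h₀, h₁⟩ := hφ k
    have hsf : ‖s • f k‖ ≤ max ‖v‖ |s| := by
      rw [norm_smul, Real.norm_eq_abs]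
      exact (mul_le_of_le_one_right (abs_nonneg s) (hf_apply k)).trans (le_max_right _ _)
    exact (norm_smul_add_one_sub_smul_le_max h₀ h₁ _ _).trans (max_le (le_max_left _ _) hsf)
  · refine ((f + c • g).norm_lt_iff one_pos).2 fun k => ?_
    obtain ⟨h₀, h₁⟩ := hφ k
    have hfar : ‖(1 + c * s) • f k‖ < 1 := by
      rw [norm_smul, Real.norm_eq_abs]
      exact (mul_le_of_le_one_right (abs_nonneg _) (hf_apply k)).trans_lt hs
    have hsplit : (f + c • g) k = φ k • (f k + c • v) + (1 - φ k) • (1 + c * s) • f k := by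
      simp only [add_apply, coe_smul, Pi.smul_apply, g, coe_mk]
      module
    rw [hsplit]
    by_cases hk : k ∈ V
    · exact (norm_smul_add_one_sub_smul_le_max h₀ h₁ _ _).trans_lt (max_lt (hV_lt k hk) hfar)
    · simpa [hφV hk] using hfar

theorem norm_apply_eq_one_of_rightSymPt [T2Space K] {f : C(K, X)} (hf : ‖f‖ = 1)
    (hsym : RightSymPt ℝ f) (k₀ : K) : ‖f k₀‖ = 1 := by
  have : Nonempty K := ⟨k₀⟩
  obtain ⟨ks, hks⟩ := f.exists_norm_apply_eq_norm
  rw [hf] at hks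
  have : Nontrivial X := ⟨f ks, 0, fun h => by simp [h] at hks⟩
  by_contra hne
  have hlt : ‖f k₀‖ < 1 := (hf ▸ f.norm_coe_le_norm k₀).lt_of_ne hne
  obtain ⟨u, hu, hminus⟩ := exists_norm_eq_one_inMinus (f k₀)
  obtain ⟨t, ht, ht1, hk₀V⟩ : ∃ t : ℝ, 0 < t ∧ t < 1 ∧ ‖f k₀‖ < 1 - t :=
    ⟨(1 - ‖f k₀‖) / 2, by linarith, by linarith [norm_nonneg (f k₀)], by linarith⟩
  let V := {k | ‖f k‖ < 1 - t}
  have hV_lt (k : K) (hk : k ∈ V) : ‖f k + -t • u‖ < 1 :=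
    calc ‖f k + -t • u‖ ≤ ‖f k‖ + t := by
          refine (norm_add_le _ _).trans_eq ?_
          rw [norm_smul, hu, mul_one, norm_neg, Real.norm_of_nonneg ht.le]
      _ < 1 := by linarith [show ‖f k‖ < 1 - t from hk]
  obtain ⟨g, hgk₀, hg_far, hg_norm, hfg⟩ := f.exists_bump hf.le
    (isOpen_lt f.continuous.norm continuous_const) hk₀V u hV_lt
    (s := 1) (by rw [mul_one, abs_lt]; constructor <;> linarith)
  have hks_far : ks ∉ V := by simp [V, hks]; linarith
  rw [hu, abs_one, max_self] at hg_norm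
  have hgf : BJOrth ℝ g f := by
    refine bjOrth_of_inPlus_of_inMinus (k₁ := ks) (k₂ := k₀) ?_ ?_ (by rwa [hgk₀, hu])
      (hgk₀ ▸ hminus)
    all_goals rw [hg_far ks hks_far, one_smul]
    · rwa [hks]
    · exact inPlus_self _
  linarith [hsym g hgf (-t)]

theorem rightSymPt_apply_of_rightSymPt [T2Space K] {f : C(K, X)} (hf : ‖f‖ = 1)
    (hsym : RightSymPt ℝ f) (k₀ : K) : RightSymPt ℝ (f k₀) := by
  have hk₀ := norm_apply_eq_one_of_rightSymPt hf hsym k₀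
  intro y hy c
  by_contra! hc
  rw [hk₀] at hc
  have hc0 : c ≠ 0 := by rintro rfl; simp [hk₀] at hc
  have hy0 : y ≠ 0 := by rintro rfl; simp [hk₀] at hc
  set η := min (|c| * ‖y‖) 1
  have hη : 0 < η := lt_min (by positivity) one_pos
  have hs : |1 + c * -(η / c)| < 1 := by
    rw [mul_neg, mul_div_cancel₀ _ hc0, abs_lt]
    constructor <;> linarith [min_le_right (|c| * ‖y‖) 1]
  obtain ⟨g, hgk₀, -, hg_norm, hfg⟩ := f.exists_bump hf.le
    (isOpen_lt (f.continuous.add continuous_const).norm continuous_const)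
    (V := {k | ‖f k + c • y‖ < 1}) hc y (fun k hk => hk) hs
  have hsy : |-(η / c)| ≤ ‖y‖ := by
    rw [abs_neg, abs_div, abs_of_pos hη, div_le_iff₀ (abs_pos.2 hc0), mul_comm]
    exact min_le_left _ _
  rw [max_eq_left hsy] at hg_norm
  have hgf : BJOrth ℝ g f := bjOrth_of_apply (k := k₀) (by rwa [hgk₀]) (hgk₀ ▸ hy)
  linarith [hsym g hgf c]

end ContinuousMap

theorem stmt9_general (K X : Type*) [TopologicalSpace K] [CompactSpace K] [T2Space K]
    [NormedAddCommGroup X] [NormedSpace ℝ X]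
    (f : C(K, X)) (hf : ‖f‖ = 1) (hsym : RightSymPt ℝ f) :
    ∀ k : K, ‖f k‖ = 1 ∧ RightSymPt ℝ (f k) := fun k =>
  ⟨ContinuousMap.norm_apply_eq_one_of_rightSymPt hf hsym k,
    ContinuousMap.rightSymPt_apply_of_rightSymPt hf hsym k⟩

/-- Necessity for right symmetry in C(K, X). -/
theorem stmt9 (K X : Type*) [TopologicalSpace K] [CompactSpace K] [T2Space K]
    [NormedAddCommGroup X] [NormedSpace ℝ X] [CompleteSpace X]
    (f : C(K, X)) (hf : ‖f‖ = 1) (hsym : RightSymPt ℝ f) :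
    ∀ k : K, ‖f k‖ = 1 ∧ RightSymPt ℝ (f k) :=
  stmt9_general K X f hf hsym
end

section
/- Let X be a real Banach space. A norm-one element x ∈ X is right symmetric if and only if for every u ∈ X: x ∈ u⁻ implies u ∈ x⁻, and x ∈ u⁺ implies u ∈ x⁺. -/
open scoped ENNReal

/-! If `x` is right symmetric and `x ∈ u⁻`, pick `t₀ ≥ 0` minimising `‖u + t • x‖` (a minimiser
exists by coercivity, and `x ∈ u⁻` lets it be taken nonnegative). Then `u + t₀ • x ⊥_B x`, hence
`x ⊥_B u + t₀ • x` by right symmetry, and for `t ≤ 0` the vector `x + t • u` equals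
`(1 - t t₀) • x + t • (u + t₀ • x)` with `1 - t t₀ ≥ 1`, so its norm is at least `‖x‖`.
The `⁺` case is the `⁻` case for `-u`, and the converse holds because `⊥_B` is the conjunction
of the `⁺` and `⁻` conditions. -/

open Filter

section

variable {X : Type*} [NormedAddCommGroup X] [NormedSpace ℝ X]

theorem bjOrth_iff_inMinus_and_inPlus {x y : X} :
    BJOrth ℝ x y ↔ InMinus x y ∧ InPlus x y :=
  ⟨fun h => ⟨fun t _ => h t, fun t _ => h t⟩,
    fun ⟨hm, hp⟩ t => (le_total t 0).elim (hm t) (hp t)⟩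

theorem inPlus_iff_inMinus_neg_left {u x : X} : InPlus u x ↔ InMinus (-u) x := by
  have hneg (t : ℝ) : ‖-u + t • x‖ = ‖u + (-t) • x‖ := by
    rw [← norm_neg, neg_add, neg_neg, neg_smul]
  refine ⟨fun h t ht => ?_, fun h t ht => ?_⟩
  · rw [norm_neg, hneg]
    exact h (-t) (neg_nonneg.2 ht)
  · have := h (-t) (neg_nonpos.2 ht)
    rwa [norm_neg, hneg, neg_neg] at this

theorem inPlus_iff_inMinus_neg_right {x u : X} : InPlus x u ↔ InMinus x (-u) := by
  refine ⟨fun h t ht => ?_, fun h t ht => ?_⟩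
  · simpa using h (-t) (neg_nonneg.2 ht)
  · simpa using h (-t) (neg_nonpos.2 ht)

theorem tendsto_norm_add_smul_cocompact {x : X} (hx : x ≠ 0) (u : X) :
    Tendsto (fun t : ℝ => ‖u + t • x‖) (cocompact ℝ) atTop := by
  refine tendsto_atTop_mono (fun t => ?_) (tendsto_atTop_add_const_right _ (-‖u‖)
    (tendsto_norm_cocompact_atTop.atTop_mul_const (norm_pos_iff.2 hx)))
  rw [← norm_smul]
  linarith [norm_le_add_norm_add' u (t • x)]

theorem exists_forall_norm_add_smul_le (u x : X) :
    ∃ t₀ : ℝ, ∀ t : ℝ, ‖u + t₀ • x‖ ≤ ‖u + t • x‖ := by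
  rcases eq_or_ne x 0 with rfl | hx
  · exact ⟨0, by simp⟩
  · exact (by fun_prop : Continuous fun t : ℝ => ‖u + t • x‖).exists_forall_le
      (tendsto_norm_add_smul_cocompact hx u)

theorem BJOrth.abs_mul_norm_le {x v : X} (h : BJOrth ℝ x v) (a b : ℝ) :
    |a| * ‖x‖ ≤ ‖a • x + b • v‖ := by
  rcases eq_or_ne a 0 with rfl | ha
  · simp
  · calc |a| * ‖x‖ ≤ |a| * ‖x + (b / a) • v‖ := by gcongr; exact h _
      _ = ‖a • x + b • v‖ := by
        rw [← Real.norm_eq_abs, ← norm_smul, smul_add, smul_smul, mul_div_cancel₀ _ ha]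

theorem RightSymPt.inMinus_symm {x u : X} (hx : RightSymPt ℝ x) (h : InMinus u x) :
    InMinus x u := by
  obtain ⟨t₀, ht₀, hmin⟩ : ∃ t₀ : ℝ, 0 ≤ t₀ ∧ ∀ t : ℝ, ‖u + t₀ • x‖ ≤ ‖u + t • x‖ := by
    obtain ⟨t₀, hmin⟩ := exists_forall_norm_add_smul_le u x
    rcases le_or_gt 0 t₀ with ht₀ | ht₀
    · exact ⟨t₀, ht₀, hmin⟩
    · refine ⟨0, le_rfl, fun t => ?_⟩
      simpa using (h t₀ ht₀.le).trans (hmin t)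
  have horth : BJOrth ℝ x (u + t₀ • x) := hx _ fun c => by
    simpa [add_assoc, ← add_smul] using hmin (t₀ + c)
  intro t ht
  calc ‖x‖ ≤ |1 - t * t₀| * ‖x‖ := by
        rw [abs_of_nonneg (by nlinarith)]
        exact le_mul_of_one_le_left (norm_nonneg x) (by nlinarith)
    _ ≤ ‖(1 - t * t₀) • x + t • (u + t₀ • x)‖ := horth.abs_mul_norm_le _ _
    _ = ‖x + t • u‖ := by
      congr 1
      match_scalars <;> ring

end

theorem stmt10_general {X : Type*} [NormedAddCommGroup X] [NormedSpace ℝ X]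
    (x : X) :
    RightSymPt ℝ x ↔
      ∀ u : X, (InMinus u x → InMinus x u) ∧ (InPlus u x → InPlus x u) := by
  refine ⟨fun hx u => ⟨hx.inMinus_symm, fun h => ?_⟩, fun h y hyx => ?_⟩
  · rw [inPlus_iff_inMinus_neg_left] at h
    exact inPlus_iff_inMinus_neg_right.2 (hx.inMinus_symm h)
  · rw [bjOrth_iff_inMinus_and_inPlus] at hyx ⊢
    exact ⟨(h y).1 hyx.1, (h y).2 hyx.2⟩

/-- Characterization of right symmetric points of a real Banach space. -/
theorem stmt10 {X : Type*} [NormedAddCommGroup X] [NormedSpace ℝ X] [CompleteSpace X]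
    (x : X) (hx : ‖x‖ = 1) :
    RightSymPt ℝ x ↔
      ∀ u : X, (InMinus u x → InMinus x u) ∧ (InPlus u x → InPlus x u) :=
  stmt10_general x
end

section
/- Let X, Y be reflexive Banach spaces and T : X → Y a rank-one bounded linear operator of norm one that is a left symmetric point of L(X, Y). Then there exist a left symmetric point w of Y and a left symmetric point f of X* such that Tx = f(x)·w for all x ∈ X. -/
open scoped ENNReal

/-!
Write `T = f ⊗ w`. Since `‖f ⊗ w‖ = ‖f‖ ‖w‖`, the maps `y ↦ f ⊗ y` and `g ↦ g ⊗ w` are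
linear and scale norms by the constants `‖f‖ > 0` and `‖w‖ > 0`, so they preserve and reflect
Birkhoff-James orthogonality. Hence an orthogonality `w ⊥_B y` (resp. `f ⊥_B g`) lifts to
`T ⊥_B f ⊗ y` (resp. `T ⊥_B g ⊗ w`), left symmetry of `T` reverses it, and the reversed
orthogonality descends again.
-/

namespace ContinuousLinearMap

variable {𝕜 X Y : Type*} [RCLike 𝕜]
  [NormedAddCommGroup X] [NormedSpace 𝕜 X] [NormedAddCommGroup Y] [NormedSpace 𝕜 Y]

theorem exists_eq_smulRight_of_finrank_range_eq_one {T : X →L[𝕜] Y}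
    (hrank : Module.finrank 𝕜 (LinearMap.range T.toLinearMap) = 1) :
    ∃ (f : StrongDual 𝕜 X) (w : Y), f ≠ 0 ∧ w ≠ 0 ∧ T = f.smulRight w := by
  obtain ⟨⟨w, x₀, hx₀ : T x₀ = w⟩, hw, hspan⟩ := finrank_eq_one_iff'.mp hrank
  replace hw : w ≠ 0 := fun h => hw (Subtype.ext h)
  obtain ⟨φ, hφ⟩ := SeparatingDual.exists_eq_one (R := 𝕜) hw
  have hT : T = (φ.comp T).smulRight w := by
    ext x
    obtain ⟨c, hc⟩ := hspan ⟨T x, LinearMap.mem_range_self _ x⟩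
    have hc : T x = c • w := (congrArg Subtype.val hc).symm
    simp [hc, hφ]
  have hf : φ.comp T ≠ 0 := fun h => by
    simpa [hx₀, hφ] using congrArg (· x₀) h
  exact ⟨φ.comp T, w, hf, hw, hT⟩

theorem bjOrth_smulRight_right_iff {f : StrongDual 𝕜 X} (hf : f ≠ 0) {w y : Y} :
    BJOrth 𝕜 (f.smulRight w) (f.smulRight y) ↔ BJOrth 𝕜 w y := by
  have hsum (c : 𝕜) : f.smulRight w + c • f.smulRight y = f.smulRight (w + c • y) := by
    ext x
    simp [smul_add, smul_comm c (f x)]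
  simp only [BJOrth, hsum, norm_smulRight_apply, mul_le_mul_iff_right₀ (norm_pos_iff.mpr hf)]

theorem bjOrth_smulRight_left_iff {w : Y} (hw : w ≠ 0) {f g : StrongDual 𝕜 X} :
    BJOrth 𝕜 (f.smulRight w) (g.smulRight w) ↔ BJOrth 𝕜 f g := by
  have hsum (c : 𝕜) : f.smulRight w + c • g.smulRight w = (f + c • g).smulRight w := by
    ext x
    simp [add_smul, smul_smul]
  simp only [BJOrth, hsum, norm_smulRight_apply, mul_le_mul_iff_left₀ (norm_pos_iff.mpr hw)]

end ContinuousLinearMap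

namespace LeftSymPt

open ContinuousLinearMap

variable {𝕜 X Y : Type*} [RCLike 𝕜]
  [NormedAddCommGroup X] [NormedSpace 𝕜 X] [NormedAddCommGroup Y] [NormedSpace 𝕜 Y]

theorem of_smulRight_right {f : StrongDual 𝕜 X} {w : Y} (h : LeftSymPt 𝕜 (f.smulRight w))
    (hf : f ≠ 0) : LeftSymPt 𝕜 w := fun _ hwy =>
  (bjOrth_smulRight_right_iff hf).mp (h _ ((bjOrth_smulRight_right_iff hf).mpr hwy))

theorem of_smulRight_left {f : StrongDual 𝕜 X} {w : Y} (h : LeftSymPt 𝕜 (f.smulRight w))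
    (hw : w ≠ 0) : LeftSymPt 𝕜 f := fun _ hfg =>
  (bjOrth_smulRight_left_iff hw).mp (h _ ((bjOrth_smulRight_left_iff hw).mpr hfg))

end LeftSymPt

theorem stmt17_general (𝕜 X Y : Type*) [RCLike 𝕜]
    [NormedAddCommGroup X] [NormedSpace 𝕜 X]
    [NormedAddCommGroup Y] [NormedSpace 𝕜 Y]
    (T : X →L[𝕜] Y) (hrank : Module.finrank 𝕜 (LinearMap.range T.toLinearMap) = 1)
    (hsym : LeftSymPt 𝕜 T) :
    ∃ (w : Y) (f : X →L[𝕜] 𝕜), LeftSymPt 𝕜 w ∧ LeftSymPt 𝕜 f ∧ ∀ x : X, T x = f x • w := by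
  obtain ⟨f, w, hf, hw, rfl⟩ :=
    ContinuousLinearMap.exists_eq_smulRight_of_finrank_range_eq_one hrank
  exact ⟨w, f, hsym.of_smulRight_right hf, hsym.of_smulRight_left hw,
    fun _ => ContinuousLinearMap.smulRight_apply ..⟩

/-- A rank-one norm-one left symmetric operator between reflexive Banach spaces is of the form
x ↦ f(x) w with w, f left symmetric. -/
theorem stmt17 (𝕜 X Y : Type*) [RCLike 𝕜]
    [NormedAddCommGroup X] [NormedSpace 𝕜 X] [CompleteSpace X]
    [NormedAddCommGroup Y] [NormedSpace 𝕜 Y] [CompleteSpace Y]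
    (hX : Function.Surjective (NormedSpace.inclusionInDoubleDual 𝕜 X))
    (hY : Function.Surjective (NormedSpace.inclusionInDoubleDual 𝕜 Y))
    (T : X →L[𝕜] Y) (hrank : Module.finrank 𝕜 (LinearMap.range T.toLinearMap) = 1)
    (hT : ‖T‖ = 1) (hsym : LeftSymPt 𝕜 T) :
    ∃ (w : Y) (f : X →L[𝕜] 𝕜), LeftSymPt 𝕜 w ∧ LeftSymPt 𝕜 f ∧ ∀ x : X, T x = f x • w :=
  stmt17_general 𝕜 X Y T hrank hsym
end
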